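/- Soundness of the reachability algorithm: in a finitely-branching transition system, if breadth-first search from the initial state up to depth max (Algorithm 2) returns a state u with trace tr, then u is reachable from init by the trace tr of actions (each consecutive pair related by the transition relation) and u satisfies the non-refinement constraint, i.e., u is a reachable unsafe state. -/

import Mathlib

/-- Reachability by a trace of actions. -/
def ReachBy {S A : Type*} (step : S → A → S → Prop) : S → List A → S → Prop
  | s, [], u => u = s
  | s, a :: tr, u => ∃ s1, step s a s1 ∧ ReachBy step s1 tr u

/-- Abstract characterisation of the states (with their traces) explored by
bounded breadth-first search from `init` up to depth `max` (Algorithm 2). -/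
inductive Explored {S A : Type*} (step : S → A → S → Prop) (init : S) (max : ℕ) :
    S → List A → Prop
  | init : Explored step init max init []
  | step {s : S} {tr : List A} {a : A} {s' : S} :
      Explored step init max s tr → tr.length < max → step s a s' →
      Explored step init max s' (tr ++ [a])

section

variable {S A : Type*} {step : S → A → S → Prop}

theorem ReachBy.append {s t v : S} {tr₁ tr₂ : List A} (h₁ : ReachBy step s tr₁ t)
    (h₂ : ReachBy step t tr₂ v) : ReachBy step s (tr₁ ++ tr₂) v := by
  induction tr₁ generalizing s with
  | nil => cases h₁; exact h₂
  | cons a tr₁ ih =>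
    obtain ⟨s₁, hs, h₁⟩ := h₁
    exact ⟨s₁, hs, ih h₁⟩

theorem ReachBy.snoc {s t t' : S} {tr : List A} {a : A} (h : ReachBy step s tr t)
    (ht : step t a t') : ReachBy step s (tr ++ [a]) t' :=
  h.append ⟨t', ht, rfl⟩

variable {init : S} {max : ℕ} {u : S} {tr : List A}

theorem Explored.reachBy (h : Explored step init max u tr) : ReachBy step init tr u := by
  induction h with
  | init => rfl
  | step _ _ hs ih => exact ih.snoc hs

theorem Explored.length_le (h : Explored step init max u tr) : tr.length ≤ max := by
  cases h with
  | init => exact Nat.zero_le max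
  | step _ hlt _ => simpa using hlt

end

/-- Soundness of Algorithm 2: any state returned by bounded BFS (an explored
state satisfying the non-refinement constraint `U`) is reachable from `init` by
its trace within `max` steps and is unsafe. -/
theorem bfs_sound {S A : Type*} (step : S → A → S → Prop) (init : S) (max : ℕ)
    (U : S → Prop) (u : S) (tr : List A)
    (hret : Explored step init max u tr) (hU : U u) :
    ReachBy step init tr u ∧ tr.length ≤ max ∧ U u :=
  ⟨hret.reachBy, hret.length_le, hU⟩
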